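/- arXiv:2201.06501 — 6 statements merged into one kernel-verified Lean document; each statement's English description precedes it below -/
import Mathlib

section
/- Let N be a natural number and define the matrix Υ̂ = (γ̂_{ij})_{i,j=0}^N with γ̂_{ij} = -1/(i! · j! · (i+j+1)). Then Υ̂ = -Û^T D̂ Û, where D̂ is the diagonal matrix with entries d̂_k = (k!)^2 / ((2k)! (2k+1)!) for k = 0,...,N, and Û = (μ̂_{kj}) is the upper triangular matrix with μ̂_{kj} = (2k+1)! j! / (k! (j-k)! (k+j+1)!) for j ≥ k and μ̂_{kj} = 0 for j < k. -/
/-!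
`fₖ(x) = legendreMoment x k = x(x-1)⋯(x-k+1) / ((x+1)(x+2)⋯(x+k+1))` is the moment
`∫₀¹ tˣ P̃ₖ(t) dt` of the shifted Legendre polynomial `P̃ₖ`, so
`∑ₖ (2k+1) fₖ(x) fₖ(y) = ∫₀¹ t^(x+y) dt = 1/(x+y+1)` is Parseval's identity in `L²[0,1]`.
Algebraically the sum telescopes, because `(x+k+1)(y+k+1) - (x-k)(y-k) = (2k+1)(x+y+1)`, and at a
natural number `x = i` the tail term vanishes once `k > i`. The `(i, j)` entry of `Ûᵀ D̂ Û` is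
`(i! j!)⁻¹ ∑ₖ (2k+1) fₖ(i) fₖ(j)`.
-/
open Finset Nat

section
variable {K : Type*} [Field K]

def pochhammerRatio (x : K) (k : ℕ) : K := ∏ m ∈ range k, (x - m) / (x + m + 1)

def legendreMoment (x : K) (k : ℕ) : K := pochhammerRatio x k / (x + k + 1)

theorem pochhammerRatio_succ (x : K) (k : ℕ) :
    pochhammerRatio x (k + 1) = pochhammerRatio x k * ((x - k) / (x + k + 1)) :=
  prod_range_succ _ _

theorem pochhammerRatio_natCast_of_lt {i k : ℕ} (h : i < k) : pochhammerRatio (i : K) k = 0 :=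
  prod_eq_zero (mem_range.2 h) (by simp)

theorem legendreMoment_natCast_of_lt {i k : ℕ} (h : i < k) : legendreMoment (i : K) k = 0 := by
  rw [legendreMoment, pochhammerRatio_natCast_of_lt h, zero_div]

section CharZero
variable [CharZero K]

theorem pochhammerRatio_natCast {i k : ℕ} (h : k ≤ i) :
    pochhammerRatio (i : K) k = (i ! : K) ^ 2 / ((i - k)! * (i + k)!) := by
  induction k with
  | zero =>
    have : (i ! : K) ≠ 0 := by exact_mod_cast i.factorial_ne_zero
    simp [pochhammerRatio, ← sq, this]
  | succ k ih =>
    rw [pochhammerRatio_succ, ih (by omega)]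
    obtain ⟨a, rfl⟩ : ∃ a, i = k + 1 + a := ⟨i - (k + 1), by omega⟩
    rw [show k + 1 + a - k = a + 1 by omega, show k + 1 + a + k = 2 * k + a + 1 by omega,
      show k + 1 + a - (k + 1) = a by omega, show k + 1 + a + (k + 1) = 2 * k + a + 2 by omega,
      Nat.factorial_succ a, Nat.factorial_succ (2 * k + a + 1)]
    push_cast
    field_simp
    ring

theorem legendreMoment_natCast {i k : ℕ} (h : k ≤ i) :
    legendreMoment (i : K) k = (i ! : K) ^ 2 / ((i - k)! * (i + k + 1)!) := by
  rw [legendreMoment, pochhammerRatio_natCast h, Nat.factorial_succ]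
  push_cast
  field_simp

end CharZero

section Ordered
variable [LinearOrder K] [IsStrictOrderedRing K]

theorem two_mul_add_one_mul_legendreMoment_mul {x y : K} (hx : 0 ≤ x) (hy : 0 ≤ y) (k : ℕ) :
    (2 * k + 1) * legendreMoment x k * legendreMoment y k =
      pochhammerRatio x k * pochhammerRatio y k / (x + y + 1) -
        pochhammerRatio x (k + 1) * pochhammerRatio y (k + 1) / (x + y + 1) := by
  have hxk : x + k + 1 ≠ 0 := by positivity
  have hyk : y + k + 1 ≠ 0 := by positivity
  have hxy : x + y + 1 ≠ 0 := by positivity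
  rw [legendreMoment, legendreMoment, pochhammerRatio_succ, pochhammerRatio_succ]
  field_simp
  ring

theorem sum_range_two_mul_add_one_mul_legendreMoment_mul {x y : K} (hx : 0 ≤ x) (hy : 0 ≤ y)
    (n : ℕ) :
    ∑ k ∈ range n, (2 * k + 1) * legendreMoment x k * legendreMoment y k =
      (1 - pochhammerRatio x n * pochhammerRatio y n) / (x + y + 1) := by
  simp_rw [two_mul_add_one_mul_legendreMoment_mul hx hy]
  rw [sum_range_sub' (fun k => pochhammerRatio x k * pochhammerRatio y k / (x + y + 1)), sub_div]
  simp [pochhammerRatio]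

end Ordered

end

noncomputable def hilbertCholeskyFactor (k j : ℕ) : ℝ :=
  if k ≤ j then (2 * k + 1)! * j ! / (k ! * (j - k)! * (k + j + 1)!) else 0

noncomputable def hilbertCholeskyDiag (k : ℕ) : ℝ := k ! ^ 2 / ((2 * k)! * (2 * k + 1)!)

theorem hilbertCholeskyFactor_eq (k j : ℕ) :
    hilbertCholeskyFactor k j = (2 * k + 1)! / (k ! * j !) * legendreMoment (j : ℝ) k := by
  rcases le_or_gt k j with h | h
  · rw [hilbertCholeskyFactor, if_pos h, legendreMoment_natCast h, add_comm k j]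
    field_simp
  · rw [hilbertCholeskyFactor, if_neg h.not_ge, legendreMoment_natCast_of_lt h, mul_zero]

theorem hilbertCholeskyDiag_mul_sq (k : ℕ) :
    hilbertCholeskyDiag k * ((2 * k + 1)! / k !) ^ 2 = 2 * k + 1 := by
  rw [hilbertCholeskyDiag, Nat.factorial_succ (2 * k)]
  push_cast
  field_simp

theorem sum_hilbertCholeskyFactor_mul {i j n : ℕ} (hi : i < n) :
    ∑ k ∈ range n, hilbertCholeskyFactor k i * hilbertCholeskyDiag k * hilbertCholeskyFactor k j =
      1 / (i ! * j ! * (i + j + 1)) := by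
  have hterm (k : ℕ) :
      hilbertCholeskyFactor k i * hilbertCholeskyDiag k * hilbertCholeskyFactor k j =
        (2 * k + 1) * legendreMoment (i : ℝ) k * legendreMoment (j : ℝ) k / (i ! * j !) := by
    rw [hilbertCholeskyFactor_eq, hilbertCholeskyFactor_eq, ← hilbertCholeskyDiag_mul_sq k]
    field_simp
  simp_rw [hterm, ← sum_div]
  rw [sum_range_two_mul_add_one_mul_legendreMoment_mul (Nat.cast_nonneg i) (Nat.cast_nonneg j),
    pochhammerRatio_natCast_of_lt hi, zero_mul, sub_zero]
  field_simp

/-- Cholesky type decomposition of the scaled Hilbert matrix: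
`Υ̂ = -Û^T D̂ Û` where `γ̂_{ij} = -1/(i! j! (i+j+1))`,
`d̂_k = (k!)²/((2k)!(2k+1)!)`, and `μ̂_{kj} = (2k+1)! j!/(k! (j-k)! (k+j+1)!)` for `j ≥ k`. -/
theorem hilbert_type_cholesky (N : ℕ) :
    (Matrix.of fun i j : Fin (N + 1) =>
        -(1 / ((Nat.factorial i.val : ℝ) * (Nat.factorial j.val : ℝ) * (i.val + j.val + 1)))) =
      -((Matrix.of fun k j : Fin (N + 1) =>
            if k.val ≤ j.val then
              ((Nat.factorial (2 * k.val + 1) : ℝ) * (Nat.factorial j.val : ℝ)) /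
                ((Nat.factorial k.val : ℝ) * (Nat.factorial (j.val - k.val) : ℝ) *
                  (Nat.factorial (k.val + j.val + 1) : ℝ))
            else 0).transpose *
          (Matrix.diagonal fun k : Fin (N + 1) =>
            ((Nat.factorial k.val : ℝ) ^ 2) /
              ((Nat.factorial (2 * k.val) : ℝ) * (Nat.factorial (2 * k.val + 1) : ℝ))) *
          (Matrix.of fun k j : Fin (N + 1) =>
            if k.val ≤ j.val then
              ((Nat.factorial (2 * k.val + 1) : ℝ) * (Nat.factorial j.val : ℝ)) /
                ((Nat.factorial k.val : ℝ) * (Nat.factorial (j.val - k.val) : ℝ) *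
                  (Nat.factorial (k.val + j.val + 1) : ℝ))
            else 0)) := by
  ext i j
  rw [Matrix.neg_apply, Matrix.mul_apply]
  simp only [Matrix.mul_diagonal, Matrix.transpose_apply, Matrix.of_apply, neg_inj]
  exact ((Fin.sum_univ_eq_sum_range (fun k => hilbertCholeskyFactor k i * hilbertCholeskyDiag k *
    hilbertCholeskyFactor k j) (N + 1)).trans (sum_hilbertCholeskyFactor_mul i.isLt)).symm
end

section
/- For every natural number N, the (N+1)×(N+1) symmetric matrix with entries 1/(i! · j! · (i+j+1)) for 0 ≤ i, j ≤ N is positive definite. -/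
/-!
The matrix is `D H D` with `D = diag (1 / i!)` and `H` the Hilbert matrix `1 / (i + j + 1)`,
which is the Gram matrix of the monomials in `L²[0, 1]`: `vᵀ H v = ∫₀¹ (∑ vᵢ xⁱ)² dx`, and this
is positive for `v ≠ 0` because a nonzero polynomial vanishes at only finitely many points.
-/

open Polynomial Matrix intervalIntegral

theorem Polynomial.eval_ofFn {R : Type*} [Semiring R] [DecidableEq R] {n : ℕ}
    (v : Fin n → R) (x : R) : (ofFn n v).eval x = ∑ i, v i * x ^ (i : ℕ) := by
  simp [ofFn_eq_sum_monomial, eval_finsetSum]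

theorem Polynomial.integral_eval_sq_pos {p : ℝ[X]} (hp : p ≠ 0) {a b : ℝ} (hab : a < b) :
    0 < ∫ x in a..b, p.eval x ^ 2 := by
  obtain ⟨c, hc, hpc⟩ : ∃ c ∈ Set.Icc a b, ¬ p.IsRoot c :=
    ((Set.Icc_infinite hab).sdiff (p.finite_setOfPred_isRoot hp)).nonempty
  exact integral_pos hab (p.continuous.pow 2).continuousOn (fun x _ => sq_nonneg _)
    ⟨c, hc, sq_pos_of_ne_zero hpc⟩

theorem Matrix.dotProduct_mulVec_of_intervalIntegral_mul {ι : Type*} [Fintype ι]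
    {f : ι → ℝ → ℝ} (hf : ∀ i, Continuous (f i)) (a b : ℝ) (v : ι → ℝ) :
    v ⬝ᵥ (of fun i j => ∫ x in a..b, f i x * f j x) *ᵥ v =
      ∫ x in a..b, (∑ i, v i * f i x) ^ 2 := by
  have hcont : ∀ i j, Continuous fun x => v i * f i x * (v j * f j x) := by
    intro i j
    have := hf i
    have := hf j
    fun_prop
  simp_rw [sq, Finset.sum_mul_sum]
  rw [integral_finsetSum fun i _ =>
    (continuous_finsetSum _ fun j _ => hcont i j).intervalIntegrable a b]
  refine Finset.sum_congr rfl fun i _ => ?_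
  rw [integral_finsetSum fun j _ => (hcont i j).intervalIntegrable a b, mulVec, dotProduct,
    Finset.mul_sum]
  refine Finset.sum_congr rfl fun j _ => ?_
  simp only [of_apply, ← integral_const_mul, ← integral_mul_const]
  congr 1
  ext x
  ring

noncomputable def hilbertMatrix (n : ℕ) : Matrix (Fin n) (Fin n) ℝ :=
  of fun i j => 1 / ((i : ℝ) + j + 1)

theorem hilbertMatrix_eq_of_intervalIntegral (n : ℕ) :
    hilbertMatrix n = of fun i j : Fin n => ∫ x in (0 : ℝ)..1, x ^ (i : ℕ) * x ^ (j : ℕ) := by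
  ext i j
  simp [hilbertMatrix, ← pow_add, integral_pow]

theorem posDef_hilbertMatrix (n : ℕ) : (hilbertMatrix n).PosDef := by
  refine .of_dotProduct_mulVec_pos (by ext i j; simp [hilbertMatrix, add_comm]) fun v hv => ?_
  rw [star_trivial, hilbertMatrix_eq_of_intervalIntegral,
    dotProduct_mulVec_of_intervalIntegral_mul (fun i => continuous_pow _)]
  simpa only [eval_ofFn] using
    integral_eval_sq_pos ((map_ne_zero_iff _ (injective_ofFn n)).mpr hv) zero_lt_one

/-- The (N+1)×(N+1) matrix with entries `1/(i! j! (i+j+1))` is positive definite. -/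
theorem hilbert_type_posDef (N : ℕ) :
    (Matrix.of fun i j : Fin (N + 1) =>
        (1 : ℝ) / ((Nat.factorial i.val : ℝ) * (Nat.factorial j.val : ℝ) *
          (i.val + j.val + 1))).PosDef := by
  set d : Fin (N + 1) → ℝ := fun i => 1 / (i : ℕ).factorial
  have hd : IsUnit (diagonal d) := isUnit_diagonal.mpr <| Pi.isUnit_iff.mpr fun i => by
    simp [d, Nat.factorial_ne_zero]
  convert hd.posDef_star_right_conjugate_iff.mpr (posDef_hilbertMatrix (N + 1)) using 1
  ext i j
  rw [star_eq_conjTranspose, diagonal_conjTranspose, star_trivial, mul_diagonal, diagonal_mul]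
  simp [d, hilbertMatrix, field]
end

section
/- Let V be a real inner product space, L : V → V a bounded linear operator with ⟨Lv, v⟩ ≤ 0 for all v ∈ V, and define the semi-inner-product [w,v] := -⟨Lw,v⟩ - ⟨w,Lv⟩ with semi-norm |v| := √[v,v]. Let N ∈ ℕ, τ > 0, and suppose the real symmetric matrix Υ = (γ_{ij})_{i,j=0}^N admits a decomposition Υ = -U^T D U where U = (μ_{kj}) is upper triangular and D = diag(d_0,...,d_N) with d_k ≥ 0. Then for any v ∈ V: ∑_{i=0}^N ∑_{j=0}^N γ_{ij} τ^{i+j+1} [L^i v, L^j v] = -∑_{k=0}^N d_k τ^{2k+1} |L^k v^{(k)}|^2 ≤ 0, where v^{(k)} = ∑_{j=k}^N μ_{kj} (τL)^{j-k} v. -/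
/-!
Substituting `γᵢⱼ = -∑ₖ μₖᵢ dₖ μₖⱼ` splits the quadratic form into `-∑ₖ dₖ` times the form
`τ [·, ·]` evaluated at `∑ⱼ μₖⱼ τʲ Lʲ v`. Because `U` is upper triangular this vector is
`(τL)ᵏ v⁽ᵏ⁾ = τᵏ Lᵏ v⁽ᵏ⁾`, which gives the identity; each term is nonnegative since `L` is
seminegative and `dₖ, τ ≥ 0`.
-/

open scoped RealInnerProductSpace

open Finset

theorem sum_sum_mul_eq_neg_sum_mul_sum_sum {ι R : Type*} [Fintype ι] [CommRing R]
    (γ μ : ι → ι → R) (d : ι → R) (hdecomp : ∀ i j, γ i j = -(∑ k, μ k i * d k * μ k j))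
    (x : ι → ι → R) :
    ∑ i, ∑ j, γ i j * x i j = -∑ k, d k * ∑ i, ∑ j, μ k i * μ k j * x i j := by
  simp only [hdecomp, neg_mul, sum_neg_distrib, sum_mul, mul_sum, neg_inj]
  conv_lhs => enter [2, i]; rw [sum_comm]
  rw [sum_comm]
  exact sum_congr rfl fun k _ => sum_congr rfl fun i _ => sum_congr rfl fun j _ => by ring

theorem ContinuousLinearMap.pow_apply_sum_pow_sub {ι R M : Type*} [Fintype ι] [Semiring R]
    [AddCommMonoid M] [Module R M] [TopologicalSpace M] (A : M →L[R] M) (k : ℕ) (e : ι → ℕ)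
    (c : ι → R) (hc : ∀ j, e j < k → c j = 0) (v : M) :
    (A ^ k) (∑ j, c j • (A ^ (e j - k)) v) = ∑ j, c j • (A ^ e j) v := by
  rw [map_sum]
  refine sum_congr rfl fun j _ => ?_
  rcases lt_or_ge (e j) k with hj | hj
  · simp [hc j hj]
  · rw [map_smul, ← mul_apply_eq_comp, ← pow_add, Nat.add_sub_cancel' hj]

section dissipationForm

variable {V : Type*} [NormedAddCommGroup V] [InnerProductSpace ℝ V]

/-- The paper's semi-inner product `[u, w]`. -/
def dissipationForm (L : V →L[ℝ] V) : V →ₗ[ℝ] V →ₗ[ℝ] ℝ :=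
  LinearMap.mk₂ ℝ (fun u w => -⟪u, L w⟫ - ⟪L u, w⟫)
    (fun u₁ u₂ w => by simp only [map_add, inner_add_left]; ring)
    (fun c u w => by simp only [map_smul, real_inner_smul_left, smul_eq_mul]; ring)
    (fun u w₁ w₂ => by simp only [map_add, inner_add_right]; ring)
    (fun c u w => by simp only [map_smul, real_inner_smul_right, smul_eq_mul]; ring)

theorem dissipationForm_apply (L : V →L[ℝ] V) (u w : V) :
    dissipationForm L u w = -⟪u, L w⟫ - ⟪L u, w⟫ :=
  rfl

theorem dissipationForm_self_nonneg {L : V →L[ℝ] V} (hL : ∀ v : V, ⟪L v, v⟫ ≤ 0) (u : V) :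
    0 ≤ dissipationForm L u u := by
  have := hL u
  rw [dissipationForm_apply, real_inner_comm]
  linarith

theorem dissipationForm_sum_smul_sum_smul {ι : Type*} [Fintype ι] (L : V →L[ℝ] V)
    (a b : ι → ℝ) (u w : ι → V) :
    dissipationForm L (∑ i, a i • u i) (∑ j, b j • w j) =
      ∑ i, ∑ j, a i * b j * dissipationForm L (u i) (w j) := by
  simp only [map_sum, map_smul, LinearMap.sum_apply, LinearMap.smul_apply,
    smul_eq_mul, mul_sum]
  rw [sum_comm]
  exact sum_congr rfl fun i _ => sum_congr rfl fun j _ => by ring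

theorem pow_mul_dissipationForm_pow_apply_sum {N : ℕ} (L : V →L[ℝ] V) (τ : ℝ)
    (μ : Fin (N + 1) → ℝ) (k : ℕ) (hμ : ∀ j : Fin (N + 1), j.val < k → μ j = 0) (v : V) :
    let w := (L ^ k) (∑ j : Fin (N + 1), μ j • ((τ • L) ^ (j.val - k)) v)
    τ ^ (2 * k + 1) * dissipationForm L w w =
      ∑ i : Fin (N + 1), ∑ j : Fin (N + 1), μ i * μ j *
        (τ ^ (i.val + j.val + 1) * dissipationForm L ((L ^ i.val) v) ((L ^ j.val) v)) := by
  intro w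
  have hw : τ ^ k • w = ∑ j : Fin (N + 1), (μ j * τ ^ j.val) • (L ^ j.val) v := by
    rw [← smul_apply, ← smul_pow,
      ContinuousLinearMap.pow_apply_sum_pow_sub _ k _ μ hμ]
    simp only [smul_pow, smul_apply, smul_smul]
  calc τ ^ (2 * k + 1) * dissipationForm L w w
      = τ * dissipationForm L (τ ^ k • w) (τ ^ k • w) := by
        simp only [map_smul, LinearMap.smul_apply, smul_eq_mul]; ring
    _ = _ := by
        rw [hw, dissipationForm_sum_smul_sum_smul, mul_sum]
        exact sum_congr rfl fun i _ => by
          rw [mul_sum]; exact sum_congr rfl fun j _ => by ring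

end dissipationForm

theorem quadratic_form_cholesky_general
    {V : Type*} [NormedAddCommGroup V] [InnerProductSpace ℝ V]
    (L : V →L[ℝ] V) (hL : ∀ v : V, ⟪L v, v⟫ ≤ 0)
    (N : ℕ) (τ : ℝ) (hτ : 0 < τ)
    (γ : Fin (N + 1) → Fin (N + 1) → ℝ) (μ : Fin (N + 1) → Fin (N + 1) → ℝ)
    (d : Fin (N + 1) → ℝ)
    (hdecomp : ∀ i j, γ i j = -(∑ k, μ k i * d k * μ k j))
    (htri : ∀ k j : Fin (N + 1), j.val < k.val → μ k j = 0)
    (hd : ∀ k, 0 ≤ d k)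
    (v : V) :
    (∑ i : Fin (N + 1), ∑ j : Fin (N + 1),
        γ i j * τ ^ (i.val + j.val + 1) *
          (-⟪(L ^ i.val) v, L ((L ^ j.val) v)⟫ - ⟪L ((L ^ i.val) v), (L ^ j.val) v⟫)) =
      -(∑ k : Fin (N + 1), d k * τ ^ (2 * k.val + 1) *
          (-⟪(L ^ k.val) (∑ j : Fin (N + 1), μ k j • ((τ • L) ^ (j.val - k.val)) v),
              L ((L ^ k.val) (∑ j : Fin (N + 1), μ k j • ((τ • L) ^ (j.val - k.val)) v))⟫ -
            ⟪L ((L ^ k.val) (∑ j : Fin (N + 1), μ k j • ((τ • L) ^ (j.val - k.val)) v)),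
              (L ^ k.val) (∑ j : Fin (N + 1), μ k j • ((τ • L) ^ (j.val - k.val)) v)⟫)) ∧
    (∑ i : Fin (N + 1), ∑ j : Fin (N + 1),
        γ i j * τ ^ (i.val + j.val + 1) *
          (-⟪(L ^ i.val) v, L ((L ^ j.val) v)⟫ - ⟪L ((L ^ i.val) v), (L ^ j.val) v⟫)) ≤ 0 := by
  simp only [← dissipationForm_apply, mul_assoc (γ _ _), mul_assoc (d _)]
  have hrow : ∀ k : Fin (N + 1), _ := fun k =>
    pow_mul_dissipationForm_pow_apply_sum L τ (μ k) k.val (htri k) v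
  simp only [hrow, sum_sum_mul_eq_neg_sum_mul_sum_sum γ μ d hdecomp, true_and,
    neg_nonpos]
  refine sum_nonneg fun k _ => ?_
  rw [← hrow k]
  exact mul_nonneg (hd k) (mul_nonneg (pow_pos hτ _).le (dissipationForm_self_nonneg hL _))

/-- Lemma 2.2: if `Υ = -U^T D U` with `U` upper triangular and `D` diagonal nonnegative, then
`∑_{i,j} γ_{ij} τ^{i+j+1} [L^i v, L^j v] = -∑_k d_k τ^{2k+1} |L^k v^{(k)}|² ≤ 0`,
where `[w,u] = -⟪Lw,u⟫ - ⟪w,Lu⟫` and `v^{(k)} = ∑_{j≥k} μ_{kj} (τL)^{j-k} v`. -/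
theorem quadratic_form_cholesky
    {V : Type*} [NormedAddCommGroup V] [InnerProductSpace ℝ V] [CompleteSpace V]
    (L : V →L[ℝ] V) (hL : ∀ v : V, ⟪L v, v⟫ ≤ 0)
    (N : ℕ) (τ : ℝ) (hτ : 0 < τ)
    (γ : Fin (N + 1) → Fin (N + 1) → ℝ) (μ : Fin (N + 1) → Fin (N + 1) → ℝ)
    (d : Fin (N + 1) → ℝ)
    (hdecomp : ∀ i j, γ i j = -(∑ k, μ k i * d k * μ k j))
    (htri : ∀ k j : Fin (N + 1), j.val < k.val → μ k j = 0)
    (hd : ∀ k, 0 ≤ d k)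
    (v : V) :
    (∑ i : Fin (N + 1), ∑ j : Fin (N + 1),
        γ i j * τ ^ (i.val + j.val + 1) *
          (-⟪(L ^ i.val) v, L ((L ^ j.val) v)⟫ - ⟪L ((L ^ i.val) v), (L ^ j.val) v⟫)) =
      -(∑ k : Fin (N + 1), d k * τ ^ (2 * k.val + 1) *
          (-⟪(L ^ k.val) (∑ j : Fin (N + 1), μ k j • ((τ • L) ^ (j.val - k.val)) v),
              L ((L ^ k.val) (∑ j : Fin (N + 1), μ k j • ((τ • L) ^ (j.val - k.val)) v))⟫ -
            ⟪L ((L ^ k.val) (∑ j : Fin (N + 1), μ k j • ((τ • L) ^ (j.val - k.val)) v)),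
              (L ^ k.val) (∑ j : Fin (N + 1), μ k j • ((τ • L) ^ (j.val - k.val)) v)⟫)) ∧
    (∑ i : Fin (N + 1), ∑ j : Fin (N + 1),
        γ i j * τ ^ (i.val + j.val + 1) *
          (-⟪(L ^ i.val) v, L ((L ^ j.val) v)⟫ - ⟪L ((L ^ i.val) v), (L ^ j.val) v⟫)) ≤ 0 :=
  quadratic_form_cholesky_general L hL N τ hτ γ μ d hdecomp htri hd v
end

section
/- Consider the implicit RK method with stability function R(Z) = (I - Z/2 + Z²/16)^{-1}(I + Z/2 + Z²/16) (Qin–Zhang method) applied to u̇ = Lu with L seminegative on a real Hilbert space. Setting w = (I - (τ/2)L + (τ²/16)L²)^{-1} u^n and u^{n+1} = R(τL)u^n, the energy identity ‖u^{n+1}‖² - ‖u^n‖² = -τ [w,w] - (τ³/16)[Lw, Lw] holds, where [w,v] = -⟨Lw,v⟩ - ⟨w,Lv⟩. Hence ‖u^{n+1}‖ ≤ ‖u^n‖ for all τ > 0. -/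
open scoped RealInnerProductSpace

/-! Writing `a = w + (τ²/16)L²w` and `b = (τ/2)Lw`, the two stages are `u⁰ = a - b` and
`u¹ = a + b`, so `‖u¹‖² - ‖u⁰‖² = 4⟪a, b⟫ = 2τ⟪w, Lw⟫ + (τ³/8)⟪L²w, Lw⟫`. This is the energy
identity, and both of its terms are `≤ 0` because `L` is seminegative and `τ > 0`. -/

section QinZhang

variable {V : Type*} [NormedAddCommGroup V] [InnerProductSpace ℝ V]

theorem norm_add_sq_sub_norm_sub_sq_real (a b : V) :
    ‖a + b‖ ^ 2 - ‖a - b‖ ^ 2 = 4 * ⟪a, b⟫ := by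
  rw [norm_add_sq_real, norm_sub_sq_real]
  ring

variable (L : V →L[ℝ] V)

theorem qinZhang_energy_identity (τ : ℝ) (w : V) :
    ‖w + (τ / 2) • L w + (τ ^ 2 / 16) • L (L w)‖ ^ 2 -
        ‖w - (τ / 2) • L w + (τ ^ 2 / 16) • L (L w)‖ ^ 2 =
      -τ * (-⟪L w, w⟫ - ⟪w, L w⟫) -
        (τ ^ 3 / 16) * (-⟪L (L w), L w⟫ - ⟪L w, L (L w)⟫) := by
  rw [add_right_comm, sub_add_eq_add_sub, norm_add_sq_sub_norm_sub_sq_real]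
  simp only [inner_add_left, real_inner_smul_left, real_inner_smul_right]
  rw [real_inner_comm (L w) w, real_inner_comm (L (L w)) (L w)]
  ring

variable {L}

theorem energyForm_self_nonneg (hL : ∀ v : V, ⟪L v, v⟫ ≤ 0) (v : V) :
    0 ≤ -⟪L v, v⟫ - ⟪v, L v⟫ := by
  rw [real_inner_comm (L v)]
  linarith [hL v]

end QinZhang

theorem qin_zhang_energy_general
    {V : Type*} [NormedAddCommGroup V] [InnerProductSpace ℝ V]
    (L : V →L[ℝ] V) (hL : ∀ v : V, ⟪L v, v⟫ ≤ 0)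
    (τ : ℝ) (hτ : 0 < τ) (u0 u1 w : V)
    (hw : w - (τ / 2) • L w + (τ ^ 2 / 16) • L (L w) = u0)
    (hu1 : u1 = w + (τ / 2) • L w + (τ ^ 2 / 16) • L (L w)) :
    ‖u1‖ ^ 2 - ‖u0‖ ^ 2 =
      -τ * (-⟪L w, w⟫ - ⟪w, L w⟫) -
        (τ ^ 3 / 16) * (-⟪L (L w), L w⟫ - ⟪L w, L (L w)⟫) ∧
    ‖u1‖ ≤ ‖u0‖ := by
  subst hw hu1
  have identity := qinZhang_energy_identity L τ w
  refine ⟨identity, ?_⟩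
  have dissipation : ‖w + (τ / 2) • L w + (τ ^ 2 / 16) • L (L w)‖ ^ 2 ≤
      ‖w - (τ / 2) • L w + (τ ^ 2 / 16) • L (L w)‖ ^ 2 := by
    have first := mul_nonneg hτ.le (energyForm_self_nonneg hL w)
    have second := mul_nonneg (by positivity : (0 : ℝ) ≤ τ ^ 3 / 16)
      (energyForm_self_nonneg hL (L w))
    linarith
  exact (sq_le_sq₀ (norm_nonneg _) (norm_nonneg _)).mp dissipation

/-- Energy identity of the Qin–Zhang method: with
`(I - (τ/2)L + (τ²/16)L²) w = u⁰` and `u¹ = (I + (τ/2)L + (τ²/16)L²) w`, one has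
`‖u¹‖² - ‖u⁰‖² = -τ [w,w] - (τ³/16) [Lw, Lw]` where `[w,v] = -⟪Lw,v⟫ - ⟪w,Lv⟫`;
in particular `‖u¹‖ ≤ ‖u⁰‖`. -/
theorem qin_zhang_energy
    {V : Type*} [NormedAddCommGroup V] [InnerProductSpace ℝ V] [CompleteSpace V]
    (L : V →L[ℝ] V) (hL : ∀ v : V, ⟪L v, v⟫ ≤ 0)
    (τ : ℝ) (hτ : 0 < τ) (u0 u1 w : V)
    (hw : w - (τ / 2) • L w + (τ ^ 2 / 16) • L (L w) = u0)
    (hu1 : u1 = w + (τ / 2) • L w + (τ ^ 2 / 16) • L (L w)) :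
    ‖u1‖ ^ 2 - ‖u0‖ ^ 2 =
      -τ * (-⟪L w, w⟫ - ⟪w, L w⟫) -
        (τ ^ 3 / 16) * (-⟪L (L w), L w⟫ - ⟪L w, L (L w)⟫) ∧
    ‖u1‖ ≤ ‖u0‖ :=
  qin_zhang_energy_general L hL τ hτ u0 u1 w hw hu1
end

section
/- For natural numbers k, j with j ≥ k, define μ̂_{k,j} = (2k+1)! j! / (k! (j-k)! (k+j+1)!) and d̂_k = (k!)² / ((2k)!(2k+1)!). Then for all i, j ∈ ℕ: ∑_{k=0}^{min(i,j)} d̂_k μ̂_{k,i} μ̂_{k,j} = 1/(i! · j! · (i+j+1)). -/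
/-!
With `g n k = n!/((n-k)! (n+k)!)` (zero for `k > n`), the `k`-th summand equals
`(g i k g j k - g i (k+1) g j (k+1)) / (i+j+1)`, because
`(i+k+1)(j+k+1) - (i-k)(j-k) = (2k+1)(i+j+1)`. The sum telescopes to `g i 0 g j 0 / (i+j+1)`.
-/

open Nat

/-- `n!/((n-k)! (n+k)!)`; through `descFactorial` it vanishes for `k > n`, which ends the telescoping. -/
def descFactorialRatio (n k : ℕ) : ℚ := n.descFactorial k / (n + k)!

lemma descFactorialRatio_zero (n : ℕ) : descFactorialRatio n 0 = 1 / n ! := by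
  simp [descFactorialRatio]

lemma descFactorialRatio_eq_zero {n k : ℕ} (h : n < k) : descFactorialRatio n k = 0 := by
  simp [descFactorialRatio, descFactorial_eq_zero_iff_lt.mpr h]

lemma descFactorialRatio_succ (n k : ℕ) :
    descFactorialRatio n (k + 1) = (n - k : ℕ) * descFactorialRatio n k / (n + k + 1) := by
  rw [descFactorialRatio, descFactorialRatio, descFactorial_succ, ← add_assoc, factorial_succ]
  push_cast
  field_simp

lemma descFactorialRatio_mul_sub_succ {i j k : ℕ} (hi : k ≤ i) (hj : k ≤ j) :
    descFactorialRatio i k * descFactorialRatio j k -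
        descFactorialRatio i (k + 1) * descFactorialRatio j (k + 1) =
      (i + j + 1) * ((2 * k + 1) * (descFactorialRatio i k / (i + k + 1)) *
        (descFactorialRatio j k / (j + k + 1))) := by
  rw [descFactorialRatio_succ, descFactorialRatio_succ, Nat.cast_sub hi, Nat.cast_sub hj]
  field_simp
  ring

lemma factorial_mul_div_eq_descFactorialRatio {n k : ℕ} (hk : k ≤ n) :
    ((2 * k + 1)! : ℚ) * n ! / (k ! * (n - k)! * (k + n + 1)!) =
      (2 * k + 1)! / k ! * (descFactorialRatio n k / (n + k + 1)) := by
  rw [descFactorialRatio, ← factorial_mul_descFactorial hk,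
    show k + n + 1 = n + k + 1 by ring, factorial_succ (n + k)]
  push_cast
  field_simp

lemma factorial_sq_div_mul_div_sq_eq_two_mul_add_one (k : ℕ) :
    (k ! : ℚ) ^ 2 / ((2 * k)! * (2 * k + 1)!) * ((2 * k + 1)! / k !) * ((2 * k + 1)! / k !) =
      2 * k + 1 := by
  rw [factorial_succ]
  push_cast
  field_simp

/-- With `d̂_k = (k!)²/((2k)!(2k+1)!)` and `μ̂_{k,j} = (2k+1)! j!/(k!(j-k)!(k+j+1)!)` for `j ≥ k`,
one has `∑_{k=0}^{min(i,j)} d̂_k μ̂_{k,i} μ̂_{k,j} = 1/(i! j! (i+j+1))`. -/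
theorem hilbert_entry_identity (i j : ℕ) :
    ∑ k ∈ Finset.range (min i j + 1),
        ((Nat.factorial k : ℚ) ^ 2 /
            ((Nat.factorial (2 * k) : ℚ) * (Nat.factorial (2 * k + 1) : ℚ))) *
          ((Nat.factorial (2 * k + 1) : ℚ) * (Nat.factorial i : ℚ) /
            ((Nat.factorial k : ℚ) * (Nat.factorial (i - k) : ℚ) *
              (Nat.factorial (k + i + 1) : ℚ))) *
          ((Nat.factorial (2 * k + 1) : ℚ) * (Nat.factorial j : ℚ) /
            ((Nat.factorial k : ℚ) * (Nat.factorial (j - k) : ℚ) *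
              (Nat.factorial (k + j + 1) : ℚ))) =
      1 / ((Nat.factorial i : ℚ) * (Nat.factorial j : ℚ) * (i + j + 1)) := by
  set F : ℕ → ℚ := fun k ↦ descFactorialRatio i k * descFactorialRatio j k
  have summand_eq : ∀ k ∈ Finset.range (min i j + 1),
      (k ! : ℚ) ^ 2 / ((2 * k)! * (2 * k + 1)!) *
          ((2 * k + 1)! * i ! / (k ! * (i - k)! * (k + i + 1)!)) *
          ((2 * k + 1)! * j ! / (k ! * (j - k)! * (k + j + 1)!)) =
        (F k - F (k + 1)) / (i + j + 1) := by
    intro k hk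
    have hi : k ≤ i := by grind
    have hj : k ≤ j := by grind
    rw [factorial_mul_div_eq_descFactorialRatio hi, factorial_mul_div_eq_descFactorialRatio hj,
      descFactorialRatio_mul_sub_succ hi hj, ← factorial_sq_div_mul_div_sq_eq_two_mul_add_one k]
    field_simp
  have hF_end : F (min i j + 1) = 0 := by
    rcases min_choice i j with h | h <;> simp [F, h, descFactorialRatio_eq_zero]
  rw [Finset.sum_congr rfl summand_eq, ← Finset.sum_div, Finset.sum_range_sub', hF_end]
  simp only [F, descFactorialRatio_zero, sub_zero]
  field_simp
end

section
/- Fix p, q ∈ ℤ⁺ and s ∈ ℝ with 2s ∉ ℤ. With φ̃_n(s;p,q) as in the telescoping lemma (namely φ̃_n = φ_n · [(4n+3)(1+s-2p)(q-n)(1+2s+2n-2q) + (4n+1)(s-2q)(1+2p+2n)(s-p-n)] / [(s-p)(1+2p)(s-q)(1+2q)], where φ_n = (s+3/2-p)_n(1-p)_n(s+1/2-q)_n(-q)_n / [(p-s+1)_n(p+3/2)_n(q-s+1)_n(q+3/2)_n]), one has ∑_{n=0}^{p-1} φ̃_n(s;p,q) = 1. -/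
/-!
The terms telescope, `φ̃_n = Φ_n - Φ_{n+1}`: the ratio `φ_{n+1} / φ_n` is a quotient of linear
factors, and the factors `n + 1 + p - s`, `2n + 3 + 2p`, … of `Φ_{n+1}` cancel its denominator,
so both sides are `φ_n` times a polynomial. Hence the sum is `Φ_0 - Φ_p`, with `Φ_0 = 1` and
`Φ_p = 0` because `(1 - p)_p = 0`.
-/

/-- The rising factorial (Pochhammer symbol) `(x)_n = x (x+1) ⋯ (x+n-1)`. -/
noncomputable def risingFactorial (x : ℝ) (n : ℕ) : ℝ :=
  ∏ k ∈ Finset.range n, (x + k)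

/-- `φ_n(s;p,q)`. -/
noncomputable def varphi (s : ℝ) (p q : ℕ) (n : ℕ) : ℝ :=
  (risingFactorial (s + 3 / 2 - p) n * risingFactorial (1 - p) n *
      risingFactorial (s + 1 / 2 - q) n * risingFactorial (-q) n) /
    (risingFactorial ((p : ℝ) - s + 1) n * risingFactorial ((p : ℝ) + 3 / 2) n *
      risingFactorial ((q : ℝ) - s + 1) n * risingFactorial ((q : ℝ) + 3 / 2) n)

/-- `Φ_n(s;p,q)`. -/
noncomputable def Phi (s : ℝ) (p q : ℕ) (n : ℕ) : ℝ :=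
  (((n : ℝ) + p - s) * (1 + 2 * p + 2 * n) * ((n : ℝ) + q - s) * (1 + 2 * q + 2 * n) /
      ((s - p) * (1 + 2 * p) * (s - q) * (1 + 2 * q))) * varphi s p q n

/-- `φ̃_n(s;p,q)` (denoted `ϕ_n` in the paper). -/
noncomputable def phiT (s : ℝ) (p q : ℕ) (n : ℕ) : ℝ :=
  varphi s p q n *
    ((4 * (n : ℝ) + 3) * (1 + s - 2 * p) * ((q : ℝ) - n) * (1 + 2 * s + 2 * n - 2 * q) +
      (4 * (n : ℝ) + 1) * (s - 2 * q) * (1 + 2 * p + 2 * n) * (s - p - n)) /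
    ((s - p) * (1 + 2 * p) * (s - q) * (1 + 2 * q))

lemma risingFactorial_zero (x : ℝ) : risingFactorial x 0 = 1 :=
  Finset.prod_range_zero _

lemma risingFactorial_succ (x : ℝ) (n : ℕ) :
    risingFactorial x (n + 1) = risingFactorial x n * (x + n) :=
  Finset.prod_range_succ _ n

lemma risingFactorial_eq_zero {x : ℝ} {k n : ℕ} (hk : k < n) (hx : x + k = 0) :
    risingFactorial x n = 0 :=
  Finset.prod_eq_zero (Finset.mem_range.mpr hk) hx

section

variable {s : ℝ} (p q : ℕ)

lemma varphi_zero : varphi s p q 0 = 1 := by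
  simp [varphi, risingFactorial_zero]

lemma varphi_succ (n : ℕ) :
    varphi s p q (n + 1) = varphi s p q n *
      (((s + 3 / 2 - p + n) * (1 - p + n) * (s + 1 / 2 - q + n) * (-(q : ℝ) + n)) /
      (((p : ℝ) - s + 1 + n) * ((p : ℝ) + 3 / 2 + n) * ((q : ℝ) - s + 1 + n) *
        ((q : ℝ) + 3 / 2 + n))) := by
  rw [varphi, varphi, div_mul_div_comm]
  congr 1 <;> simp only [risingFactorial_succ] <;> ring

lemma varphi_eq_zero {n : ℕ} (hp : 0 < p) (hn : p ≤ n) : varphi s p q n = 0 := by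
  have hvanish : risingFactorial (1 - p) n = 0 :=
    risingFactorial_eq_zero (k := p - 1) (by omega) (by push_cast [Nat.cast_sub hp]; ring)
  simp [varphi, hvanish]

variable (hs : ∀ m : ℕ, s ≠ m)
include hs

lemma Phi_zero : Phi s p q 0 = 1 := by
  have hsp : s - p ≠ 0 := sub_ne_zero.mpr (hs p)
  have hsq : s - q ≠ 0 := sub_ne_zero.mpr (hs q)
  rw [Phi, varphi_zero, Nat.cast_zero, mul_one, div_eq_one_iff_eq (by positivity)]
  ring

lemma Phi_succ (n : ℕ) :
    Phi s p q (n + 1) =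
      4 * (s + 3 / 2 - p + n) * (1 - p + n) * (s + 1 / 2 - q + n) * (n - q) /
        ((s - p) * (1 + 2 * p) * (s - q) * (1 + 2 * q)) * varphi s p q n := by
  have hp' : (p : ℝ) - s + 1 + n ≠ 0 := fun h => hs (p + 1 + n) (by push_cast; linarith)
  have hq' : (q : ℝ) - s + 1 + n ≠ 0 := fun h => hs (q + 1 + n) (by push_cast; linarith)
  have hsp : s - p ≠ 0 := sub_ne_zero.mpr (hs p)
  have hsq : s - q ≠ 0 := sub_ne_zero.mpr (hs q)
  rw [Phi, varphi_succ]
  push_cast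
  field_simp
  ring

lemma phiT_eq_Phi_sub_Phi_succ (n : ℕ) :
    phiT s p q n = Phi s p q n - Phi s p q (n + 1) := by
  rw [phiT, Phi, Phi_succ p q hs]
  ring

end

theorem sum_phiT_eq_one_general (p q : ℕ) (hp : 0 < p)
    (s : ℝ) (hs : ∀ m : ℤ, 2 * s ≠ (m : ℝ)) :
    ∑ n ∈ Finset.range p, phiT s p q n = 1 := by
  have hs' : ∀ m : ℕ, s ≠ m := fun m h => hs (2 * m) (by push_cast; linarith)
  calc ∑ n ∈ Finset.range p, phiT s p q n
      = ∑ n ∈ Finset.range p, (Phi s p q n - Phi s p q (n + 1)) :=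
        Finset.sum_congr rfl fun n _ => phiT_eq_Phi_sub_Phi_succ p q hs' n
    _ = Phi s p q 0 - Phi s p q p := Finset.sum_range_sub' _ p
    _ = 1 := by rw [Phi_zero p q hs', Phi, varphi_eq_zero p q hp le_rfl, mul_zero, sub_zero]

/-- Lemma 5.7: `∑_{n=0}^{p-1} φ̃_n(s;p,q) = 1`. -/
theorem sum_phiT_eq_one (p q : ℕ) (hp : 0 < p) (hq : 0 < q)
    (s : ℝ) (hs : ∀ m : ℤ, 2 * s ≠ (m : ℝ)) :
    ∑ n ∈ Finset.range p, phiT s p q n = 1 :=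
  sum_phiT_eq_one_general p q hp s hs
end
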